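/- (Projections relative to an obtuse basis) Assume the basis (λ_i)_{i∈I₀} is obtuse, let P ⊆ I₀ and let i ∈ I₀∖P. Then the orthogonal projection of λ_i onto span{λ_j : j ∈ P} is a linear combination Σ_{j∈P} c_j λ_j with c_j ≤ 0 for every j ∈ P. Consequently, if Λ ∈ V₀ satisfies ⟨λ_j, Λ⟩ ≤ 0 for every j ∈ I₀, then ⟨λ_{P,i}, Λ⟩ ≤ 0 for every i ∈ I₀∖P. -/

import Mathlib

open scoped Classical

noncomputable section

local notation "⟪" x ", " y "⟫" => @inner ℝ _ _ x y

variable {V : Type*} [NormedAddCommGroup V] [InnerProductSpace ℝ V] [FiniteDimensional ℝ V]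
variable {I : Type*} [Fintype I] [DecidableEq I]

/-- `lamProj lam P i` is the orthogonal projection `λ_{P,i}` of `λ_i` onto the orthogonal
complement of the span of `{λ_j : j ∈ P}`. -/
noncomputable def lamProj (lam : I → V) (P : Finset I) (i : I) : V :=
  (Submodule.orthogonalProjectionOnto ((Submodule.span ℝ (lam '' ↑P))ᗮ) (lam i) : V)

/-- `mu P Q i` (for `i ∈ Q \ P`) is the dual basis `μ_{P,i}^Q` of the basis
`Δ_P^Q = (λ_{P,i})_{i ∈ Q\P}` of the subspace `V_P^Q` it spans:  it is characterized by
membership in `V_P^Q` together with `⟪μ_{P,i}^Q, λ_{P,j}⟫ = δ_{ij}`. -/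
def IsDualSystem (lam : I → V) (mu : Finset I → Finset I → I → V) : Prop :=
  ∀ P Q : Finset I, P ⊆ Q → ∀ i ∈ Q \ P,
    mu P Q i ∈ Submodule.span ℝ (lamProj lam P '' ↑(Q \ P)) ∧
      ∀ j ∈ Q \ P, ⟪mu P Q i, lamProj lam P j⟫ = if i = j then 1 else 0

/-- The characteristic function `θ_{P,Q}^Λ`. -/
noncomputable def theta (lam : I → V) (mu : Finset I → Finset I → I → V) (Λ : V)
    (P Q : Finset I) (H : V) : ℤ :=
  if P ⊆ Q ∧ ∀ i ∈ Q \ P,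
      (0 < ⟪mu P Q i, Λ⟫ → ⟪lamProj lam P i, H⟫ ≤ 0) ∧
      (⟪mu P Q i, Λ⟫ ≤ 0 → 0 < ⟪lamProj lam P i, H⟫)
  then 1 else 0

/-- The characteristic function `θ̂_{P,Q}^Λ`. -/
noncomputable def thetaHat (lam : I → V) (mu : Finset I → Finset I → I → V) (Λ : V)
    (P Q : Finset I) (H : V) : ℤ :=
  if P ⊆ Q ∧ ∀ i ∈ Q \ P,
      (0 < ⟪lamProj lam P i, Λ⟫ → ⟪mu P Q i, H⟫ ≤ 0) ∧
      (⟪lamProj lam P i, Λ⟫ ≤ 0 → 0 < ⟪mu P Q i, H⟫)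
  then 1 else 0

/-- `b_{P,Q}^Λ`, the number of `i ∈ Q \ P` with `⟪μ_{P,i}^Q, Λ⟫ ≤ 0`. -/
noncomputable def bcard (mu : Finset I → Finset I → I → V) (Λ : V) (P Q : Finset I) : ℕ :=
  ((Q \ P).filter fun i => ⟪mu P Q i, Λ⟫ ≤ 0).card

/-- `b̂_{P,Q}^Λ`, the number of `i ∈ Q \ P` with `⟪λ_{P,i}, Λ⟫ ≤ 0`. -/
noncomputable def bhatcard (lam : I → V) (Λ : V) (P Q : Finset I) : ℕ :=
  ((Q \ P).filter fun i => ⟪lamProj lam P i, Λ⟫ ≤ 0).card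

/-- `η_{P,Q}^Λ = |P| + b_{P,Q}^Λ`. -/
noncomputable def eta (mu : Finset I → Finset I → I → V) (Λ : V) (P Q : Finset I) : ℕ :=
  P.card + bcard mu Λ P Q

/-- `η̂_{P,Q}^Λ = |P| + b̂_{P,Q}^Λ`. -/
noncomputable def etaHat (lam : I → V) (Λ : V) (P Q : Finset I) : ℕ :=
  P.card + bhatcard lam Λ P Q

/-- `P_Λ^Q = P ∪ {i ∈ Q\P : ⟪μ_{P,i}^Q, Λ⟫ ≤ 0}`. -/
noncomputable def PLam (mu : Finset I → Finset I → I → V) (Λ : V) (P Q : Finset I) : Finset I :=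
  P ∪ (Q \ P).filter fun i => ⟪mu P Q i, Λ⟫ ≤ 0

/-- `Q_P^Λ = P ∪ {i ∈ Q\P : ⟪λ_{P,i}, Λ⟫ > 0}`. -/
noncomputable def QLam (lam : I → V) (Λ : V) (P Q : Finset I) : Finset I :=
  P ∪ (Q \ P).filter fun i => 0 < ⟪lamProj lam P i, Λ⟫

/-- The basis is obtuse if `⟪λ_i, λ_j⟫ ≤ 0` for `i ≠ j`. -/
def Obtuse (lam : I → V) : Prop := ∀ i j : I, i ≠ j → ⟪lam i, lam j⟫ ≤ 0

theorem orthogonalProjection_orthogonal_val (K : Submodule ℝ V) [K.HasOrthogonalProjection]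
    (u : V) : (Submodule.orthogonalProjectionOnto Kᗮ u : V) = u - Submodule.orthogonalProjectionOnto K u :=
  K.starProjection_orthogonal_val u

theorem sub_orthogonalProjection_mem_orthogonal {K : Submodule ℝ V} [K.HasOrthogonalProjection]
    (v : V) : v - (Submodule.orthogonalProjectionOnto K v : V) ∈ Kᗮ :=
  K.sub_starProjection_mem_orthogonal v

theorem eq_orthogonalProjection_of_mem_orthogonal' {K : Submodule ℝ V} [K.HasOrthogonalProjection]
    {u v z : V} (hv : v ∈ K) (hz : z ∈ Kᗮ) (hu : u = v + z) :
    (Submodule.orthogonalProjectionOnto K u : V) = v :=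
  K.eq_starProjection_of_mem_orthogonal' hv hz hu

set_option linter.unusedSectionVars false in
theorem proj_insert (b : I → V) (P : Finset I) (k : I) (v : V)
    (hw : (b k - (Submodule.orthogonalProjectionOnto (Submodule.span ℝ (b '' ↑P)) (b k) : V)) ≠ 0) :
    (Submodule.orthogonalProjectionOnto (Submodule.span ℝ (b '' ↑(insert k P))) v : V)
      = (Submodule.orthogonalProjectionOnto (Submodule.span ℝ (b '' ↑P)) v : V)
        + (⟪(b k - (Submodule.orthogonalProjectionOnto (Submodule.span ℝ (b '' ↑P)) (b k) : V)), v⟫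
            / ⟪(b k - (Submodule.orthogonalProjectionOnto (Submodule.span ℝ (b '' ↑P)) (b k) : V)),
               (b k - (Submodule.orthogonalProjectionOnto (Submodule.span ℝ (b '' ↑P)) (b k) : V))⟫)
          • (b k - (Submodule.orthogonalProjectionOnto (Submodule.span ℝ (b '' ↑P)) (b k) : V)) := by
  set K := Submodule.span ℝ (b '' ↑P) with hK
  set w := b k - (Submodule.orthogonalProjectionOnto K (b k) : V) with hwdef
  set c := ⟪w, v⟫ / ⟪w, w⟫ with hc
  have hww : ⟪w, w⟫ ≠ 0 := fun h => hw (inner_self_eq_zero.mp h)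
  have hKK' : K ≤ Submodule.span ℝ (b '' ↑(insert k P)) := by
    apply Submodule.span_mono
    apply Set.image_mono
    simp [Finset.coe_insert, Set.subset_insert]
  have hwK' : w ∈ Submodule.span ℝ (b '' ↑(insert k P)) := by
    apply Submodule.sub_mem
    · exact Submodule.subset_span ⟨k, by simp, rfl⟩
    · exact hKK' (Submodule.orthogonalProjectionOnto K (b k)).2
  have hwKorth : w ∈ Kᗮ := sub_orthogonalProjection_mem_orthogonal (K := K) (b k)
  apply eq_orthogonalProjection_of_mem_orthogonal'
    (v := (Submodule.orthogonalProjectionOnto K v : V) + c • w)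
    (z := v - ((Submodule.orthogonalProjectionOnto K v : V) + c • w))
  · exact Submodule.add_mem _ (hKK' (Submodule.orthogonalProjectionOnto K v).2) (Submodule.smul_mem _ _ hwK')
  · rw [Submodule.mem_orthogonal]
    intro u hu
    induction hu using Submodule.span_induction with
    | mem x hx =>
      obtain ⟨j, hj, rfl⟩ := hx
      rw [Finset.coe_insert, Set.mem_insert_iff] at hj
      have hvK : v - (Submodule.orthogonalProjectionOnto K v : V) ∈ Kᗮ :=
        sub_orthogonalProjection_mem_orthogonal (K := K) v
      rcases hj with rfl | hj
      · have h1 : ⟪b j, v - (Submodule.orthogonalProjectionOnto K v : V)⟫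
            = ⟪w, v - (Submodule.orthogonalProjectionOnto K v : V)⟫ := by
          have : ⟪(Submodule.orthogonalProjectionOnto K (b j) : V), v - (Submodule.orthogonalProjectionOnto K v : V)⟫ = 0 :=
            Submodule.inner_right_of_mem_orthogonal (Submodule.orthogonalProjectionOnto K (b j)).2 hvK
          rw [hwdef, inner_sub_left, this, sub_zero]
        have h2 : ⟪b j, w⟫ = ⟪w, w⟫ := by
          have : ⟪(Submodule.orthogonalProjectionOnto K (b j) : V), w⟫ = 0 :=
            Submodule.inner_right_of_mem_orthogonal (Submodule.orthogonalProjectionOnto K (b j)).2 hwKorth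
          rw [hwdef, inner_sub_left, this, sub_zero]
        have h3 : ⟪w, v - (Submodule.orthogonalProjectionOnto K v : V)⟫ = ⟪w, v⟫ := by
          have : ⟪w, (Submodule.orthogonalProjectionOnto K v : V)⟫ = 0 :=
            Submodule.inner_left_of_mem_orthogonal (Submodule.orthogonalProjectionOnto K v).2 hwKorth
          rw [inner_sub_right, this, sub_zero]
        have : v - ((Submodule.orthogonalProjectionOnto K v : V) + c • w)
            = (v - (Submodule.orthogonalProjectionOnto K v : V)) - c • w := by abel
        rw [this, inner_sub_right, h1, h3, inner_smul_right, h2, hc]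
        field_simp
        ring
      · have hjK : b j ∈ K := Submodule.subset_span ⟨j, hj, rfl⟩
        have : v - ((Submodule.orthogonalProjectionOnto K v : V) + c • w)
            = (v - (Submodule.orthogonalProjectionOnto K v : V)) - c • w := by abel
        rw [this, inner_sub_right]
        have h1 : ⟪b j, v - (Submodule.orthogonalProjectionOnto K v : V)⟫ = 0 :=
          Submodule.inner_right_of_mem_orthogonal hjK
            (sub_orthogonalProjection_mem_orthogonal (K := K) v)
        have h2 : ⟪b j, w⟫ = 0 := Submodule.inner_right_of_mem_orthogonal hjK hwKorth
        rw [h1, inner_smul_right, h2]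
        ring
    | zero => simp
    | add x y _ _ hx hy => rw [inner_add_left, hx, hy]; ring
    | smul a x _ hx => rw [real_inner_smul_left, hx]; ring
  · abel


theorem key_induction (b : Module.Basis I ℝ V) (hobt : Obtuse (⇑b)) (P : Finset I) :
    (∀ i ∉ P, ∃ c : I → ℝ, (∀ j ∈ P, c j ≤ 0) ∧
        (Submodule.orthogonalProjectionOnto (Submodule.span ℝ (⇑b '' ↑P)) (b i) : V) = ∑ j ∈ P, c j • b j)
    ∧ (∀ i ∉ P, ∀ j ∉ P, i ≠ j → ⟪lamProj (⇑b) P i, lamProj (⇑b) P j⟫ ≤ 0)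
    ∧ (∀ Λ : V, (∀ j : I, ⟪b j, Λ⟫ ≤ 0) → ∀ i ∉ P, ⟪lamProj (⇑b) P i, Λ⟫ ≤ 0) := by
  induction P using Finset.induction_on with
  | empty =>
    have hlam : ∀ i, lamProj (⇑b) (∅ : Finset I) i = b i := by
      intro i
      simp [lamProj, orthogonalProjection_orthogonal_val, Submodule.starProjection_top]
    refine ⟨fun i _ => ⟨0, by simp, by simp⟩, fun i _ j _ hij => ?_, fun Λ hΛ i _ => ?_⟩
    · rw [hlam, hlam]; exact hobt i j hij
    · rw [hlam]; exact hΛ i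
  | @insert k P hk ih =>
    obtain ⟨ih1, ih2, ih3⟩ := ih
    set K := Submodule.span ℝ (⇑b '' ↑P) with hK
    set w := b k - (Submodule.orthogonalProjectionOnto K (b k) : V) with hwdef
    have hwlam : w = lamProj (⇑b) P k := by
      rw [lamProj, orthogonalProjection_orthogonal_val]
    have hw : w ≠ 0 := by
      intro h
      have : b k ∈ K := by
        have := sub_eq_zero.mp h
        rw [this]; exact (Submodule.orthogonalProjectionOnto K (b k)).2
      exact b.linearIndependent.notMem_span_image (by simpa using hk) this
    have hww : (0:ℝ) < ⟪w, w⟫ := by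
      rw [real_inner_self_eq_norm_mul_norm]
      have := norm_pos_iff.mpr hw
      positivity
    have hwKorth : w ∈ Kᗮ := sub_orthogonalProjection_mem_orthogonal (K := K) (b k)
    -- t i and its properties
    set t : I → ℝ := fun i => ⟪w, b i⟫ / ⟪w, w⟫ with ht
    have htlam : ∀ i, ⟪w, b i⟫ = ⟪w, lamProj (⇑b) P i⟫ := by
      intro i
      have h0 : ⟪w, (Submodule.orthogonalProjectionOnto K (b i) : V)⟫ = 0 :=
        Submodule.inner_left_of_mem_orthogonal (Submodule.orthogonalProjectionOnto K (b i)).2 hwKorth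
      have : lamProj (⇑b) P i = b i - (Submodule.orthogonalProjectionOnto K (b i) : V) := by
        rw [lamProj, orthogonalProjection_orthogonal_val]
      rw [this, inner_sub_right, h0, sub_zero]
    have htnonpos : ∀ i, i ∉ P → i ≠ k → t i ≤ 0 := by
      intro i hiP hik
      have : ⟪w, b i⟫ ≤ 0 := by
        rw [htlam i, hwlam]
        exact ih2 k hk i hiP (Ne.symm hik)
      exact div_nonpos_of_nonpos_of_nonneg this hww.le
    -- recursion for lamProj
    have hrec : ∀ v : V, (Submodule.orthogonalProjectionOnto (Submodule.span ℝ (⇑b '' ↑(insert k P))) v : V)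
        = (Submodule.orthogonalProjectionOnto K v : V) + (⟪w, v⟫ / ⟪w, w⟫) • w := fun v =>
      proj_insert (⇑b) P k v hw
    have hlamrec : ∀ i, lamProj (⇑b) (insert k P) i = lamProj (⇑b) P i - t i • w := by
      intro i
      rw [lamProj, orthogonalProjection_orthogonal_val, hrec (b i), lamProj,
        orthogonalProjection_orthogonal_val]
      rw [ht]
      abel
    have hinner : ∀ i, ⟪lamProj (⇑b) P i, w⟫ = t i * ⟪w, w⟫ := by
      intro i
      rw [ht]
      have : ⟪lamProj (⇑b) P i, w⟫ = ⟪w, b i⟫ := by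
        rw [htlam i, real_inner_comm]
      rw [this]
      field_simp
    refine ⟨?_, ?_, ?_⟩
    · -- coefficients
      intro i hi
      have hik : i ≠ k := fun h => hi (h ▸ Finset.mem_insert_self k P)
      have hiP : i ∉ P := fun h => hi (Finset.mem_insert_of_mem h)
      obtain ⟨c, hc, hceq⟩ := ih1 i hiP
      obtain ⟨d, hd, hdeq⟩ := ih1 k hk
      refine ⟨fun j => if j = k then t i else c j - t i * d j, ?_, ?_⟩
      · intro j hj
        rcases Finset.mem_insert.mp hj with rfl | hjP
        · simp [htnonpos i hiP hik]
        · have hjk : j ≠ k := fun h => hk (h ▸ hjP)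
          simp only [hjk, if_false]
          have : 0 ≤ t i * d j := by nlinarith [htnonpos i hiP hik, hd j hjP]
          linarith [hc j hjP]
      · rw [hrec (b i), hceq]
        have hgoal : (⟪w, b i⟫ / ⟪w, w⟫) = t i := rfl
        rw [hgoal, Finset.sum_insert hk]
        simp only [if_pos rfl, if_true]
        have hstep : ∀ j ∈ P, (if j = k then t i else c j - t i * d j) • b j
            = c j • b j - (t i * d j) • b j := by
          intro j hjP
          have hjk : j ≠ k := fun h => hk (h ▸ hjP)
          simp [hjk, sub_smul]
        rw [Finset.sum_congr rfl hstep, hwdef, hdeq]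
        rw [Finset.sum_sub_distrib]
        rw [smul_sub, Finset.smul_sum]
        simp only [smul_smul]
        abel
    · -- pairwise
      intro i hi j hj hij
      have hik : i ≠ k := fun h => hi (h ▸ Finset.mem_insert_self k P)
      have hiP : i ∉ P := fun h => hi (Finset.mem_insert_of_mem h)
      have hjk : j ≠ k := fun h => hj (h ▸ Finset.mem_insert_self k P)
      have hjP : j ∉ P := fun h => hj (Finset.mem_insert_of_mem h)
      rw [hlamrec i, hlamrec j]
      rw [inner_sub_left, inner_sub_right, inner_sub_right]
      rw [real_inner_smul_left, real_inner_smul_right, real_inner_smul_right,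
        real_inner_smul_left]
      rw [hinner i]
      have hinnerj : ⟪w, lamProj (⇑b) P j⟫ = t j * ⟪w, w⟫ := by
        rw [← htlam j, ht]; field_simp
      rw [hinnerj]
      have h1 : ⟪lamProj (⇑b) P i, lamProj (⇑b) P j⟫ ≤ 0 := ih2 i hiP j hjP hij
      have h2 : 0 ≤ t i * t j := by nlinarith [htnonpos i hiP hik, htnonpos j hjP hjk]
      nlinarith [hww]
    · -- Λ
      intro Λ hΛ i hi
      have hik : i ≠ k := fun h => hi (h ▸ Finset.mem_insert_self k P)
      have hiP : i ∉ P := fun h => hi (Finset.mem_insert_of_mem h)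
      rw [hlamrec i, inner_sub_left, real_inner_smul_left]
      have h1 : ⟪lamProj (⇑b) P i, Λ⟫ ≤ 0 := ih3 Λ hΛ i hiP
      have h2 : ⟪w, Λ⟫ ≤ 0 := by rw [hwlam]; exact ih3 Λ hΛ k hk
      have h3 : 0 ≤ t i * ⟪w, Λ⟫ := by nlinarith [htnonpos i hiP hik]
      linarith

/-- Projections relative to an obtuse basis: the orthogonal projection of `λ_i` onto
`span{λ_j : j ∈ P}` is a linear combination `Σ_{j∈P} c_j λ_j` with all `c_j ≤ 0`;
consequently, if `⟪λ_j, Λ⟫ ≤ 0` for every `j`, then `⟪λ_{P,i}, Λ⟫ ≤ 0` for every `i ∉ P`. -/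
theorem obtuse_projection_coefficients
    (b : Module.Basis I ℝ V) (hobt : Obtuse (⇑b)) (P : Finset I) (i : I) (hi : i ∉ P) :
    (∃ c : I → ℝ, (∀ j ∈ P, c j ≤ 0) ∧
        (Submodule.orthogonalProjectionOnto (Submodule.span ℝ (⇑b '' ↑P)) (b i) : V) = ∑ j ∈ P, c j • b j)
    ∧ ∀ Λ : V, (∀ j : I, ⟪b j, Λ⟫ ≤ 0) →
        ∀ i' : I, i' ∉ P → ⟪lamProj (⇑b) P i', Λ⟫ ≤ 0 := by
  obtain ⟨h1, _, h3⟩ := key_induction b hobt P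
  exact ⟨h1 i hi, h3⟩
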